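/- arXiv:2512.18701 — 2 statements merged into one kernel-verified Lean document; each statement's English description precedes it below -/
import Mathlib

section
/- Let p, η > 0, q_min > 0, and let q : [0,T]×ℝ → ℝ be bounded and measurable with q ≥ q_min, such that for each t the map x ↦ q(t,x) is continuous. Define the exponential nonlocal term W_η(t,x) = ((p/η) ∫_x^∞ e^{p(x−y)/η} q(t,y)^p dy)^{1/p}. Then for every (t,x) ∈ [0,T]×ℝ, the function x ↦ W_η(t,x) is differentiable at x and the identity q(t,x)^p = W_η(t,x)^p − η W_η(t,x)^{p−1} ∂_x W_η(t,x) holds. -/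
/-! The tail integral `K x = (p/η) ∫_x^∞ e^{p(x-y)/η} q(t,y)^p dy` equals `W_η(t,x)^p` and, by
the fundamental theorem of calculus after factoring out `e^{px/η}`, satisfies
`K' = (p/η) (K - q(t,·)^p)`. Since `q ≥ q_min > 0` keeps `K` positive, `W_η = K^{1/p}` is
differentiable with `η W_η^{p-1} ∂ₓW_η = (η/p) K' = K - q^p`. -/

open MeasureTheory Real Set Filter Function

noncomputable section

/-- The essential total variation of `f : ℝ → ℝ`: the infimum of the pointwise
total variation over all representatives of the a.e.-equivalence class of `f`. -/
def essTV (f : ℝ → ℝ) : ENNReal :=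
  ⨅ g ∈ {g : ℝ → ℝ | g =ᵐ[volume] f}, eVariationOn g Set.univ

/-- The `L^∞(ℝ)` norm of `f : ℝ → ℝ` (essential supremum of `|f|`). -/
def linf (f : ℝ → ℝ) : ℝ :=
  essSup (fun x => |f x|) volume

/-- The nonlocal `p`-norm operator `W_{p,η}[q,γ]` with kernel `γ` and nonlocal reach `η`. -/
def Wnl (p η : ℝ) (γ : ℝ → ℝ) (q : ℝ → ℝ → ℝ) (t x : ℝ) : ℝ :=
  (η⁻¹ * ∫ y in Set.Ioi x, (γ ((y - x) / η) * q t y) ^ p) ^ p⁻¹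

/-- The exponential-kernel nonlocal operator (kernel `exp(-·)` normalized in `L^p`,
whence the factor `p`). -/
def Wexp (p η : ℝ) (q : ℝ → ℝ → ℝ) (t x : ℝ) : ℝ :=
  ((p / η) * ∫ y in Set.Ioi x, Real.exp (p * (x - y) / η) * q t y ^ p) ^ p⁻¹

/-- Admissible test functions on `(-∞,T) × ℝ`: `C¹`, compactly supported,
vanishing for `t ≥ T`. -/
def TestFun (T : ℝ) (φ : ℝ → ℝ → ℝ) : Prop :=
  ContDiff ℝ 1 (Function.uncurry φ) ∧ HasCompactSupport (Function.uncurry φ) ∧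
    ∀ t x : ℝ, T ≤ t → φ t x = 0

/-- `q` is a weak solution of `∂ₜ q + ∂ₓ (V(w(t,x)) q) = 0`, `q(0,·) = q₀`,
for the given velocity field `w`. -/
def IsWeakSol (T : ℝ) (V : ℝ → ℝ) (w : ℝ → ℝ → ℝ) (q₀ : ℝ → ℝ)
    (q : ℝ → ℝ → ℝ) : Prop :=
  ∀ φ : ℝ → ℝ → ℝ, TestFun T φ →
    (∫ t in Set.Ioc (0 : ℝ) T, ∫ x : ℝ,
        (deriv (fun s => φ s x) t + V (w t x) * deriv (fun y => φ t y) x) * q t x)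
      + (∫ x : ℝ, q₀ x * φ 0 x) = 0

/-- Membership in `C([0,T]; L¹_loc(ℝ))`. -/
def ContL1loc (T : ℝ) (q : ℝ → ℝ → ℝ) : Prop :=
  (∀ t ∈ Set.Icc (0 : ℝ) T, ∀ K : Set ℝ, IsCompact K → IntegrableOn (q t) K volume) ∧
    ∀ s ∈ Set.Icc (0 : ℝ) T, ∀ K : Set ℝ, IsCompact K →
      Filter.Tendsto (fun t => ∫ x in K, |q t x - q s x|)
        (nhdsWithin s (Set.Icc 0 T)) (nhds 0)

/-- `V ∈ W^{2,∞}_loc(ℝ)`: `C¹` with locally Lipschitz first derivative. -/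
def W2inftyLoc (V : ℝ → ℝ) : Prop :=
  ContDiff ℝ 1 V ∧
    ∀ K : Set ℝ, IsCompact K → ∃ L : NNReal, LipschitzOnWith L (deriv V) K

/-- Standing assumptions on the kernel `γ`: nonnegative, monotonically decreasing,
`W^{2,1}(ℝ_{>0})` (encoded as `C²` with integrable derivatives), `‖γ‖_{L^p(ℝ_{>0})} = 1`. -/
def KernelAss (p : ℝ) (γ : ℝ → ℝ) : Prop :=
  (∀ x ∈ Set.Ioi (0 : ℝ), 0 ≤ γ x) ∧ AntitoneOn γ (Set.Ioi 0) ∧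
    ContDiffOn ℝ 2 γ (Set.Ioi 0) ∧
    IntegrableOn γ (Set.Ioi 0) ∧ IntegrableOn (deriv γ) (Set.Ioi 0) ∧
    IntegrableOn (deriv (deriv γ)) (Set.Ioi 0) ∧
    (∫ y in Set.Ioi (0 : ℝ), γ y ^ p) = 1

/-- The solution class for the exponential-kernel nonlocal conservation law:
`C([0,T];L¹_loc)`, the maximum principle bounds, the initial datum, and the weak
formulation. `q_η` denotes the unique element of this class. -/
def ExpSol (T p η qmin : ℝ) (V q₀ : ℝ → ℝ) (q : ℝ → ℝ → ℝ) : Prop :=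
  ContL1loc T q ∧
    (∀ t ∈ Set.Icc (0 : ℝ) T, ∀ᵐ x : ℝ, qmin ≤ q t x ∧ q t x ≤ linf q₀) ∧
    (∀ᵐ x : ℝ, q 0 x = q₀ x) ∧
    IsWeakSol T V (Wexp p η q) q₀ q

open scoped Topology

theorem hasDerivAt_integral_Ioi {g : ℝ → ℝ} {a x : ℝ} (hg : IntegrableOn g (Ioi a))
    (hax : a < x) (hgx : ContinuousAt g x) :
    HasDerivAt (fun u => ∫ y in Ioi u, g y) (-g x) x := by
  have hftc : HasDerivAt (fun u => ∫ y in a..u, g y) (g x) x :=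
    intervalIntegral.integral_hasDerivAt_right
      ((intervalIntegrable_iff_integrableOn_Ioc_of_le hax.le).2
        (hg.mono_set Ioc_subset_Ioi_self))
      ⟨Ioi a, Ioi_mem_nhds hax, hg.aestronglyMeasurable⟩ hgx
  have htail : (fun u => ∫ y in Ioi u, g y)
      =ᶠ[𝓝 x] fun u => (∫ y in Ioi a, g y) - ∫ y in a..u, g y := by
    filter_upwards [Ioi_mem_nhds hax] with u hau
    rw [← intervalIntegral.integral_Ioi_sub_Ioi hg hau.le, sub_sub_cancel]
  simpa using ((hasDerivAt_const x _).sub hftc).congr_of_eventuallyEq htail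

theorem exp_mul_sub (c u y : ℝ) : exp (c * (u - y)) = exp (c * u) * exp (-(c * y)) := by
  rw [← exp_add]
  ring_nf

theorem integrableOn_exp_neg_mul_mul_of_bounded {c C a : ℝ} {h : ℝ → ℝ} (hc : 0 < c)
    (hh : AEStronglyMeasurable h (volume.restrict (Ioi a))) (hC : ∀ y, ‖h y‖ ≤ C) :
    IntegrableOn (fun y => exp (-(c * y)) * h y) (Ioi a) := by
  simp_rw [← neg_mul]
  exact (exp_neg_integrableOn_Ioi a hc).mul_bdd hh (ae_of_all _ hC)

theorem hasDerivAt_integral_Ioi_exp_mul_sub {c a x : ℝ} {h : ℝ → ℝ}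
    (hint : IntegrableOn (fun y => exp (-(c * y)) * h y) (Ioi a)) (hax : a < x)
    (hh : ContinuousAt h x) :
    HasDerivAt (fun u => ∫ y in Ioi u, exp (c * (u - y)) * h y)
      (c * (∫ y in Ioi x, exp (c * (x - y)) * h y) - h x) x := by
  have hfactor : ∀ u, (∫ y in Ioi u, exp (c * (u - y)) * h y)
      = exp (c * u) * ∫ y in Ioi u, exp (-(c * y)) * h y := fun u => by
    simp_rw [exp_mul_sub, mul_assoc, integral_const_mul]
  have hexp : HasDerivAt (fun u => exp (c * u)) (exp (c * x) * c) x := by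
    simpa using ((hasDerivAt_id x).const_mul c).exp
  have htail := hasDerivAt_integral_Ioi hint hax
    ((continuous_exp.comp (continuous_const.mul continuous_id).neg).continuousAt.mul hh)
  rw [hfactor x]
  refine ((hexp.mul htail).congr_of_eventuallyEq (.of_forall hfactor)).congr_deriv ?_
  rw [mul_neg, ← mul_assoc, ← exp_add, add_neg_cancel, exp_zero]
  ring

theorem integral_Ioi_exp_mul_sub_pos {c x : ℝ} {h : ℝ → ℝ}
    (hint : IntegrableOn (fun y => exp (-(c * y)) * h y) (Ioi x))
    (hpos : ∀ y ∈ Ioi x, 0 < h y) :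
    0 < ∫ y in Ioi x, exp (c * (x - y)) * h y := by
  simp_rw [exp_mul_sub, mul_assoc, integral_const_mul]
  refine mul_pos (exp_pos _) ?_
  have hpos' : ∀ y ∈ Ioi x, 0 < exp (-(c * y)) * h y := fun y hy =>
    mul_pos (exp_pos _) (hpos y hy)
  rw [setIntegral_pos_iff_support_of_nonneg_ae
    ((ae_restrict_iff' measurableSet_Ioi).2 (ae_of_all _ fun y hy => (hpos' y hy).le)) hint,
    inter_eq_self_of_subset_right fun y hy => mem_support.2 (hpos' y hy).ne', volume_Ioi]
  exact ENNReal.zero_lt_top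

theorem HasDerivAt.exists_rpow_inv {K : ℝ → ℝ} {K' x p : ℝ} (hK : HasDerivAt K K' x)
    (hpos : 0 < K x) (hp : p ≠ 0) :
    ∃ d, HasDerivAt (fun z => K z ^ p⁻¹) d x ∧ (K x ^ p⁻¹) ^ (p - 1) * d = K' / p := by
  refine ⟨_, hK.rpow_const (Or.inl hpos.ne'), ?_⟩
  rw [← rpow_mul hpos.le, mul_left_comm, mul_comm, ← mul_assoc, ← rpow_add hpos]
  have : p⁻¹ * (p - 1) + (p⁻¹ - 1) = 0 := by field_simp; ring
  rw [this, rpow_zero, one_mul, div_eq_mul_inv]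

theorem exp_nonlocal_identity_general
    (T p η qmin M : ℝ) (q : ℝ → ℝ → ℝ)
    (hp : 0 < p) (hη : 0 < η) (hqmin : 0 < qmin)
    (hlow : ∀ t ∈ Set.Icc (0 : ℝ) T, ∀ x : ℝ, qmin ≤ q t x)
    (hupp : ∀ t ∈ Set.Icc (0 : ℝ) T, ∀ x : ℝ, q t x ≤ M)
    (hcont : ∀ t ∈ Set.Icc (0 : ℝ) T, Continuous (q t)) :
    ∀ t ∈ Set.Icc (0 : ℝ) T, ∀ x : ℝ, ∃ d : ℝ,
      HasDerivAt (fun z => Wexp p η q t z) d x ∧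
      q t x ^ p = Wexp p η q t x ^ p - η * Wexp p η q t x ^ (p - 1) * d := by
  intro t ht x
  have hc : 0 < p / η := div_pos hp hη
  have hqp_pos : ∀ y, 0 < q t y ^ p := fun y => rpow_pos_of_pos (hqmin.trans_le (hlow t ht y)) p
  have hqp_cont : Continuous fun y => q t y ^ p := (hcont t ht).rpow_const fun _ => Or.inr hp.le
  have hint (a : ℝ) : IntegrableOn (fun y => exp (-(p / η * y)) * q t y ^ p) (Ioi a) :=
    integrableOn_exp_neg_mul_mul_of_bounded hc hqp_cont.aestronglyMeasurable fun y => by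
      rw [norm_of_nonneg (hqp_pos y).le]
      exact rpow_le_rpow (hqmin.trans_le (hlow t ht y)).le (hupp t ht y) hp.le
  have hW (z : ℝ) :
      Wexp p η q t z = (p / η * ∫ y in Ioi z, exp (p / η * (z - y)) * q t y ^ p) ^ p⁻¹ := by
    simp only [Wexp, mul_div_right_comm]
  have hpos := mul_pos hc (integral_Ioi_exp_mul_sub_pos (hint x) fun y _ => hqp_pos y)
  obtain ⟨d, hd, hdW⟩ :=
    ((hasDerivAt_integral_Ioi_exp_mul_sub (hint (x - 1)) (sub_one_lt x)
      hqp_cont.continuousAt).const_mul (p / η)).exists_rpow_inv hpos hp.ne'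
  refine ⟨d, funext hW ▸ hd, ?_⟩
  rw [hW x, rpow_inv_rpow hpos.le hp.ne', mul_assoc η, hdW]
  field_simp
  ring

/-- For the exponential nonlocal term
`W_η(t,x) = ((p/η) ∫_x^∞ e^{p(x-y)/η} q(t,y)^p dy)^{1/p}` of a bounded function `q ≥ q_min`
which is continuous in space, `x ↦ W_η(t,x)` is differentiable and the identity
`q(t,x)^p = W_η(t,x)^p - η W_η(t,x)^{p-1} ∂ₓ W_η(t,x)` holds. -/
theorem exp_nonlocal_identity
    (T p η qmin M : ℝ) (q : ℝ → ℝ → ℝ)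
    (hT : 0 < T) (hp : 0 < p) (hη : 0 < η) (hqmin : 0 < qmin)
    (hmeas : Measurable (Function.uncurry q))
    (hlow : ∀ t ∈ Set.Icc (0 : ℝ) T, ∀ x : ℝ, qmin ≤ q t x)
    (hupp : ∀ t ∈ Set.Icc (0 : ℝ) T, ∀ x : ℝ, q t x ≤ M)
    (hcont : ∀ t ∈ Set.Icc (0 : ℝ) T, Continuous (q t)) :
    ∀ t ∈ Set.Icc (0 : ℝ) T, ∀ x : ℝ, ∃ d : ℝ,
      HasDerivAt (fun z => Wexp p η q t z) d x ∧
      q t x ^ p = Wexp p η q t x ^ p - η * Wexp p η q t x ^ (p - 1) * d :=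
  exp_nonlocal_identity_general T p η qmin M q hp hη hqmin hlow hupp hcont
end
end

section
/- Let p, η > 0, q_min > 0 and q₀ ∈ L^∞(ℝ) with q₀ ≥ q_min a.e. and |q₀|_{TV(ℝ)} < ∞. Define W₀^p(x) := (p/η) ∫_x^∞ e^{p(x−y)/η} q₀(y)^p dy. Then |W₀^p|_{TV(ℝ)} ≤ |q₀^p|_{TV(ℝ)}, and moreover |q₀^p|_{TV(ℝ)} ≤ p ‖q₀‖_{L^∞(ℝ)}^{p−1} |q₀|_{TV(ℝ)} if p ≥ 1, while |q₀^p|_{TV(ℝ)} ≤ p ‖1/q₀‖_{L^∞(ℝ)}^{1−p} |q₀|_{TV(ℝ)} if p ≤ 1. In particular, the total variation of W₀^p is bounded uniformly in η. -/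
/-! `W₀^p` is the average of the translates `x ↦ q₀(x + s)^p` against the exponential
distribution of rate `p/η`, and averaging translates against a probability measure does not
increase total variation, whatever the rate.

For the power bounds, `q₀` takes its values a.e. in `[1/‖1/q₀‖_∞, ‖q₀‖_∞] ⊆ (0, ∞)`, where
`t ↦ t^p` is Lipschitz with constant `p ‖q₀‖_∞^{p-1}` if `p ≥ 1` and `p ‖1/q₀‖_∞^{1-p}`
if `p ≤ 1`. Composing each representative of `q₀` with the power map, extended constantly
off that interval, gives a representative of `q₀^p` whose variation is at most that
constant times the variation of the representative of `q₀`. -/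

open MeasureTheory Real Set Filter Function

noncomputable section

open ProbabilityTheory
open scoped NNReal ENNReal

theorem LocallyBoundedVariationOn.measurable {f : ℝ → ℝ}
    (hf : LocallyBoundedVariationOn f univ) : Measurable f := by
  obtain ⟨g, h, hg, hh, rfl⟩ := hf.exists_monotoneOn_sub_monotoneOn
  exact (monotoneOn_univ.1 hg).measurable.sub (monotoneOn_univ.1 hh).measurable

theorem eVariationOn_integral_comp_add_le {μ : Measure ℝ} [IsProbabilityMeasure μ]
    {f : ℝ → ℝ} (hf : BoundedVariationOn f univ) :
    eVariationOn (fun x => ∫ s, f (x + s) ∂μ) univ ≤ eVariationOn f univ := by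
  have hmeas : Measurable f := hf.locallyBoundedVariationOn.measurable
  have hint (x : ℝ) : Integrable (fun s => f (x + s)) μ := by
    refine .of_bound (hmeas.comp (measurable_const_add x)).aestronglyMeasurable
      (‖f 0‖ + (eVariationOn f univ).toReal) (ae_of_all _ fun s => ?_)
    have := hf.dist_le (mem_univ (x + s)) (mem_univ 0)
    rw [dist_eq_norm] at this
    linarith [norm_le_norm_add_norm_sub' (f (x + s)) (f 0)]
  have hedist (x y : ℝ) : edist (∫ s, f (x + s) ∂μ) (∫ s, f (y + s) ∂μ)
      ≤ ∫⁻ s, edist (f (x + s)) (f (y + s)) ∂μ := by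
    rw [edist_eq_enorm_sub, ← integral_sub (hint x) (hint y)]
    simpa only [edist_eq_enorm_sub] using enorm_integral_le_lintegral_enorm _
  refine iSup_le fun ⟨n, u, hu, _⟩ => ?_
  calc ∑ i ∈ Finset.range n, edist (∫ s, f (u (i + 1) + s) ∂μ) (∫ s, f (u i + s) ∂μ)
      ≤ ∑ i ∈ Finset.range n, ∫⁻ s, edist (f (u (i + 1) + s)) (f (u i + s)) ∂μ :=
        Finset.sum_le_sum fun i _ => hedist _ _
    _ = ∫⁻ s, ∑ i ∈ Finset.range n, edist (f (u (i + 1) + s)) (f (u i + s)) ∂μ :=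
        (lintegral_finsetSum _ fun i _ => by fun_prop).symm
    _ ≤ ∫⁻ _, eVariationOn f univ ∂μ := lintegral_mono fun s =>
        eVariationOn.sum_le (u := fun i => u i + s) (fun _ _ hij => add_le_add_left (hu hij) s)
          fun _ => mem_univ _
    _ = eVariationOn f univ := by simp

theorem essTV_le_eVariationOn {f g : ℝ → ℝ} (hg : g =ᵐ[volume] f) :
    essTV f ≤ eVariationOn g univ :=
  iInf₂_le g hg

theorem essTV_congr {f g : ℝ → ℝ} (h : f =ᵐ[volume] g) : essTV f = essTV g :=
  le_antisymm (le_iInf₂ fun _ (hk : _ =ᵐ[volume] _) => essTV_le_eVariationOn (hk.trans h.symm))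
    (le_iInf₂ fun _ (hk : _ =ᵐ[volume] _) => essTV_le_eVariationOn (hk.trans h))

theorem essTV_integral_comp_add_le {μ : Measure ℝ} [IsProbabilityMeasure μ]
    (hμ : μ ≪ volume) (f : ℝ → ℝ) :
    essTV (fun x => ∫ s, f (x + s) ∂μ) ≤ essTV f := by
  refine le_iInf₂ fun g (hg : g =ᵐ[volume] f) => ?_
  by_cases hbv : BoundedVariationOn g univ
  · have hshift : (fun x => ∫ s, f (x + s) ∂μ) = fun x => ∫ s, g (x + s) ∂μ := by
      funext x
      refine integral_congr_ae (hμ.ae_eq ?_)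
      exact ((measurePreserving_add_left volume x).quasiMeasurePreserving.ae_eq hg).symm
    rw [hshift]
    exact (essTV_le_eVariationOn .rfl).trans (eVariationOn_integral_comp_add_le hbv)
  · simp [not_ne_iff.1 hbv]

theorem integral_comp_add_expMeasure {b : ℝ} (hb : 0 < b) (f : ℝ → ℝ) (x : ℝ) :
    ∫ s, f (x + s) ∂expMeasure b = b * ∫ y in Ioi x, exp (b * (x - y)) * f y := by
  have hpdf (s : ℝ) :
      (exponentialPDF b s).toReal = if 0 ≤ s then b * exp (-(b * s)) else 0 := by
    rw [exponentialPDF_eq, ENNReal.toReal_ofReal]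
    split_ifs <;> positivity
  calc ∫ s, f (x + s) ∂expMeasure b
      = ∫ s, (exponentialPDF b s).toReal * f (x + s) :=
        integral_withDensity_eq_integral_toReal_smul
          (measurable_gammaPDFReal 1 b).ennreal_ofReal
          (ae_of_all _ fun _ => ENNReal.ofReal_lt_top) _
    _ = ∫ y, (exponentialPDF b (y - x)).toReal * f y := by
        simpa using integral_add_left_eq_self (fun y => (exponentialPDF b (y - x)).toReal * f y) x
    _ = ∫ y in Ici x, (exponentialPDF b (y - x)).toReal * f y := by
        refine (setIntegral_eq_integral_of_forall_compl_eq_zero fun y hy => ?_).symm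
        rw [hpdf, if_neg (by simpa using hy), zero_mul]
    _ = ∫ y in Ici x, b * (exp (b * (x - y)) * f y) := by
        refine setIntegral_congr_fun measurableSet_Ici fun y hy => ?_
        rw [hpdf, if_pos (sub_nonneg.2 hy)]
        ring_nf
    _ = b * ∫ y in Ioi x, exp (b * (x - y)) * f y := by
        rw [integral_const_mul, integral_Ici_eq_integral_Ioi]

theorem essTV_comp_le_of_lipschitzWith {φ : ℝ → ℝ} {K : ℝ≥0} (hφ : LipschitzWith K φ)
    (f : ℝ → ℝ) : essTV (fun x => φ (f x)) ≤ K * essTV f := by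
  have : Nonempty {g : ℝ → ℝ // g ∈ {g : ℝ → ℝ | g =ᵐ[volume] f}} :=
    ⟨⟨f, show f =ᵐ[volume] f from .rfl⟩⟩
  conv_rhs => rw [essTV, iInf_subtype', ENNReal.mul_iInf fun h => absurd h ENNReal.coe_ne_top]
  refine le_iInf fun ⟨g, (hg : g =ᵐ[volume] f)⟩ => ?_
  calc essTV (fun x => φ (f x)) ≤ eVariationOn (fun x => φ (g x)) univ :=
        essTV_le_eVariationOn (hg.fun_comp φ)
    _ ≤ K * eVariationOn g univ := hφ.lipschitzOnWith.comp_eVariationOn_le (mapsTo_univ _ _)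

theorem essTV_comp_le_of_lipschitzOnWith {φ : ℝ → ℝ} {K : ℝ≥0} {a b : ℝ}
    (hφ : LipschitzOnWith K φ (Icc a b)) {f : ℝ → ℝ} (hf : ∀ᵐ x, f x ∈ Icc a b) :
    essTV (fun x => φ (f x)) ≤ K * essTV f := by
  have hab : a ≤ b := by
    obtain ⟨x, hx⟩ := hf.exists
    exact hx.1.trans hx.2
  have hext : (fun x => IccExtend hab (fun t => φ t) (f x)) =ᵐ[volume] fun x => φ (f x) :=
    hf.mono fun x hx => IccExtend_of_mem hab _ hx
  rw [← essTV_congr hext]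
  exact mul_one K ▸
    essTV_comp_le_of_lipschitzWith (hφ.to_restrict.comp (LipschitzWith.projIcc hab)) f

theorem lipschitzOnWith_rpow_Icc {p lo hi L : ℝ} (hp : 1 ≤ p ∨ 0 < lo)
    (hL : ∀ x ∈ Icc lo hi, |p * x ^ (p - 1)| ≤ L) :
    LipschitzOnWith L.toNNReal (fun t => t ^ p) (Icc lo hi) := by
  refine (convex_Icc lo hi).lipschitzOnWith_of_nnnorm_hasDerivWithin_le
    (f' := fun x => p * x ^ (p - 1)) (fun x hx => ?_) fun x hx => ?_
  · exact (hasDerivAt_rpow_const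
      (hp.symm.imp_left fun h => (h.trans_le hx.1).ne')).hasDerivWithinAt
  · rw [← NNReal.coe_le_coe, coe_nnnorm, Real.norm_eq_abs, Real.coe_toNNReal']
    exact (hL x hx).trans (le_max_left _ _)

theorem lipschitzOnWith_rpow_Icc_of_one_le {p lo hi : ℝ} (hlo : 0 ≤ lo) (hp : 1 ≤ p) :
    LipschitzOnWith (p * hi ^ (p - 1)).toNNReal (fun t => t ^ p) (Icc lo hi) :=
  lipschitzOnWith_rpow_Icc (.inl hp) fun x hx => by
    have hx₀ : 0 ≤ x := hlo.trans hx.1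
    rw [abs_of_nonneg (by positivity)]
    exact mul_le_mul_of_nonneg_left (rpow_le_rpow hx₀ hx.2 (by linarith)) (by linarith)

theorem lipschitzOnWith_rpow_Icc_of_le_one {p lo hi : ℝ} (hlo : 0 < lo) (hp₀ : 0 ≤ p)
    (hp : p ≤ 1) :
    LipschitzOnWith (p * lo ^ (p - 1)).toNNReal (fun t => t ^ p) (Icc lo hi) :=
  lipschitzOnWith_rpow_Icc (.inr hlo) fun x hx => by
    have hx₀ : 0 ≤ x := hlo.le.trans hx.1
    rw [abs_of_nonneg (by positivity)]
    exact mul_le_mul_of_nonneg_left (rpow_le_rpow_of_nonpos hlo hx.1 (by linarith)) hp₀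

theorem ae_le_linf {f : ℝ → ℝ} (hf : ∃ C, ∀ᵐ x, |f x| ≤ C) :
    ∀ᵐ x, f x ≤ linf f :=
  let ⟨C, hC⟩ := hf
  (ae_le_essSup ⟨C, hC⟩).mono fun _ hx => (le_abs_self _).trans hx

theorem ae_inv_le_linf_inv {f : ℝ → ℝ} {c : ℝ} (hc : 0 < c) (hf : ∀ᵐ x, c ≤ f x) :
    ∀ᵐ x, (f x)⁻¹ ≤ linf fun x => (f x)⁻¹ :=
  ae_le_linf ⟨c⁻¹, hf.mono fun x hx => by
    rw [abs_inv, abs_of_pos (hc.trans_le hx)]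
    exact inv_anti₀ hc hx⟩

theorem linf_inv_pos {f : ℝ → ℝ} {c : ℝ} (hc : 0 < c) (hf : ∀ᵐ x, c ≤ f x) :
    0 < linf fun x => (f x)⁻¹ := by
  obtain ⟨x, hcx, hx⟩ := (hf.and (ae_inv_le_linf_inv hc hf)).exists
  exact (inv_pos.2 (hc.trans_le hcx)).trans_le hx

theorem ae_inv_linf_inv_le {f : ℝ → ℝ} {c : ℝ} (hc : 0 < c) (hf : ∀ᵐ x, c ≤ f x) :
    ∀ᵐ x, (linf fun x => (f x)⁻¹)⁻¹ ≤ f x :=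
  (hf.and (ae_inv_le_linf_inv hc hf)).mono fun _ hx =>
    (inv_le_comm₀ (linf_inv_pos hc hf) (hc.trans_le hx.1)).2 hx.2

theorem TV_bound_initial_Wp_general
    (p qmin : ℝ) (q₀ : ℝ → ℝ)
    (hp : 0 < p) (hqmin : 0 < qmin)
    (hq₀low : ∀ᵐ x : ℝ, qmin ≤ q₀ x)
    (hq₀bdd : ∃ C : ℝ, ∀ᵐ x : ℝ, |q₀ x| ≤ C) :
    ∀ η : ℝ, 0 < η →
      (essTV (fun x =>
          (p / η) * ∫ y in Set.Ioi x, Real.exp (p * (x - y) / η) * q₀ y ^ p)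
        ≤ essTV (fun x => q₀ x ^ p)) ∧
      (1 ≤ p → essTV (fun x => q₀ x ^ p)
        ≤ ENNReal.ofReal (p * linf q₀ ^ (p - 1)) * essTV q₀) ∧
      (p ≤ 1 → essTV (fun x => q₀ x ^ p)
        ≤ ENNReal.ofReal (p * linf (fun x => (q₀ x)⁻¹) ^ (1 - p)) * essTV q₀) := by
  intro η hη
  have hq₀le : ∀ᵐ x, q₀ x ≤ linf q₀ := ae_le_linf hq₀bdd
  refine ⟨?_, fun hp₁ => ?_, fun hp₁ => ?_⟩
  · have hb : 0 < p / η := div_pos hp hη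
    have : IsProbabilityMeasure (expMeasure (p / η)) := isProbabilityMeasure_expMeasure hb
    have hW : (fun x => (p / η) * ∫ y in Ioi x, exp (p * (x - y) / η) * q₀ y ^ p)
        = fun x => ∫ s, q₀ (x + s) ^ p ∂expMeasure (p / η) := by
      funext x
      rw [integral_comp_add_expMeasure hb (fun y => q₀ y ^ p)]
      simp_rw [mul_div_right_comm p]
    rw [hW]
    exact essTV_integral_comp_add_le (μ := expMeasure (p / η))
      (withDensity_absolutelyContinuous _ _) fun y => q₀ y ^ p
  · exact essTV_comp_le_of_lipschitzOnWith (lipschitzOnWith_rpow_Icc_of_one_le hqmin.le hp₁)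
      (hq₀low.and hq₀le)
  · have hm := linf_inv_pos hqmin hq₀low
    have := essTV_comp_le_of_lipschitzOnWith
      (lipschitzOnWith_rpow_Icc_of_le_one (inv_pos.2 hm) hp.le hp₁)
      ((ae_inv_linf_inv_le hqmin hq₀low).and hq₀le)
    rwa [inv_rpow hm.le, ← rpow_neg hm.le, neg_sub] at this

/-- For `q₀ ∈ L^∞(ℝ)` with `q₀ ≥ q_min > 0` and bounded total variation,
the function `W₀^p(x) = (p/η) ∫_x^∞ e^{p(x-y)/η} q₀(y)^p dy` satisfies
`|W₀^p|_{TV} ≤ |q₀^p|_{TV}`, with `|q₀^p|_{TV} ≤ p ‖q₀‖_∞^{p-1} |q₀|_{TV}` for `p ≥ 1`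
and `|q₀^p|_{TV} ≤ p ‖1/q₀‖_∞^{1-p} |q₀|_{TV}` for `p ≤ 1`; in particular the bound is
uniform in `η > 0`. -/
theorem TV_bound_initial_Wp
    (p qmin : ℝ) (q₀ : ℝ → ℝ)
    (hp : 0 < p) (hqmin : 0 < qmin)
    (hq₀meas : Measurable q₀)
    (hq₀low : ∀ᵐ x : ℝ, qmin ≤ q₀ x)
    (hq₀bdd : ∃ C : ℝ, ∀ᵐ x : ℝ, |q₀ x| ≤ C)
    (hq₀TV : essTV q₀ < ⊤) :
    ∀ η : ℝ, 0 < η →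
      (essTV (fun x =>
          (p / η) * ∫ y in Set.Ioi x, Real.exp (p * (x - y) / η) * q₀ y ^ p)
        ≤ essTV (fun x => q₀ x ^ p)) ∧
      (1 ≤ p → essTV (fun x => q₀ x ^ p)
        ≤ ENNReal.ofReal (p * linf q₀ ^ (p - 1)) * essTV q₀) ∧
      (p ≤ 1 → essTV (fun x => q₀ x ^ p)
        ≤ ENNReal.ofReal (p * linf (fun x => (q₀ x)⁻¹) ^ (1 - p)) * essTV q₀) :=
  TV_bound_initial_Wp_general p qmin q₀ hp hqmin hq₀low hq₀bdd

end
end
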